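/- Let G be a finite group, H ≤ G of index 3, and ρ an irreducible complex H-representation of odd dimension d. Then either Ind_H^G ρ is irreducible (of dimension 3d), or ρ extends to a representation of G (i.e., some irreducible constituent of Ind_H^G ρ has dimension exactly d). -/

import Mathlib

/-!
Every simple constituent `R` of `Ind ρ` contains `ρ` on restriction, so `d ≤ dim R`. If `d < dim R`,
Maschke's theorem gives a simple `σ ≠ ρ` with `ρ ⊕ σ ⊆ Res R`; Frobenius reciprocity embeds `R`
in `Ind σ`, so `dim R ≤ 3 (dim R - d)`, i.e. `3d ≤ 2 dim R`. If `Ind ρ` is reducible and no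
constituent has dimension `d`, two independent constituents `S₁ ⊕ S₂ ⊆ Ind ρ` then satisfy
`3d ≤ 2 dim Sᵢ` and `dim S₁ + dim S₂ ≤ 3d`, forcing `2 dim S₁ = 3d`, impossible for odd `d`.
-/

open CategoryTheory Limits Module

theorem CategoryTheory.Simple.mono_iff_ne_zero {C : Type*} [Category C] [Preadditive C]
    [HasKernels C] {X Y : C} [Simple X] (f : X ⟶ Y) : Mono f ↔ f ≠ 0 := by
  refine ⟨?_, mono_of_nonzero_from_simple⟩
  rintro _ rfl
  exact Simple.not_isZero X (IsZero.of_mono_zero X Y)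

universe u

namespace FDRep

section Monoid

variable {k : Type u} [Field k] {G : Type u} [Monoid G]

theorem mono_iff_injective {V W : FDRep k G} (f : V ⟶ W) : Mono f ↔ Function.Injective f :=
  ⟨fun _ ↦ (Rep.mono_iff_injective ((forget₂ (FDRep k G) (Rep k G)).map f)).1 inferInstance,
    fun h ↦ (forget₂ (FDRep k G) (Rep k G)).mono_of_mono_map ((Rep.mono_iff_injective _).2 h)⟩

theorem epi_of_surjective {V W : FDRep k G} (f : V ⟶ W) (h : Function.Surjective f) : Epi f :=
  (forget₂ (FDRep k G) (Rep k G)).epi_of_epi_map ((Rep.epi_iff_surjective _).2 h)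

theorem hom_comm_apply {V W : FDRep k G} (f : V ⟶ W) (g : G) (x : V) :
    f (V.ρ g x) = W.ρ g (f x) :=
  ConcreteCategory.congr_hom (f.comm g) x

theorem finrank_le_of_mono {V W : FDRep k G} (f : V ⟶ W) [Mono f] :
    finrank k V ≤ finrank k W :=
  LinearMap.finrank_le_finrank_of_injective (f := f.hom.hom.hom) ((mono_iff_injective f).1 ‹_›)

theorem isIso_of_mono_of_finrank_eq {V W : FDRep k G} (f : V ⟶ W) [Mono f]
    (h : finrank k V = finrank k W) : IsIso f := by
  have := epi_of_surjective f <|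
    (LinearMap.injective_iff_surjective_of_finrank_eq_finrank (f := f.hom.hom.hom) h).1
      ((mono_iff_injective f).1 ‹_›)
  exact isIso_of_mono_of_epi f

theorem finrank_lt_of_mono_of_not_simple {S V : FDRep k G} [Simple S] (f : S ⟶ V) [Mono f]
    (hV : ¬Simple V) : finrank k S < finrank k V := by
  refine (finrank_le_of_mono f).lt_of_ne fun h ↦ hV ?_
  have := isIso_of_mono_of_finrank_eq f h
  exact Simple.of_iso (asIso f).symm

theorem finrank_pos_of_ne_zero {V W : FDRep k G} {f : V ⟶ W} (hf : f ≠ 0) :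
    0 < finrank k V := by
  by_contra! h
  have : Subsingleton V := finrank_zero_iff (R := k).1 (by omega)
  refine hf (ConcreteCategory.hom_ext _ _ fun x ↦ ?_)
  rw [Subsingleton.elim x 0]
  exact (map_zero f.hom.hom.hom).trans (map_zero (0 : V ⟶ W).hom.hom.hom).symm

theorem finrank_eq_zero_of_isZero {V : FDRep k G} (hV : IsZero V) : finrank k V = 0 := by
  have : Subsingleton V := subsingleton_of_forall_eq 0 fun x ↦
    (ConcreteCategory.congr_hom (hV.eq_of_src (𝟙 V) 0) x :)
  exact finrank_zero_of_subsingleton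

theorem exists_simple_mono (V : FDRep k G) (hV : 0 < finrank k V) :
    ∃ (S : FDRep k G) (_ : Simple S) (f : S ⟶ V), Mono f := by
  induction h : finrank k V using Nat.strong_induction_on generalizing V with
  | _ n ih =>
  by_cases hs : Simple V
  · exact ⟨V, hs, 𝟙 V, inferInstance⟩
  obtain ⟨W, f, _, hiso, hf⟩ : ∃ (W : FDRep k G) (f : W ⟶ V), Mono f ∧ ¬IsIso f ∧ f ≠ 0 := by
    by_contra! hall
    refine hs ⟨fun f _ ↦ ⟨fun hi hf ↦ ?_, fun hf ↦ by_contra fun hi ↦ hf (hall _ f ‹_› hi)⟩⟩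
    rw [hf, isIsoZero_iff_source_target_isZero] at hi
    exact hV.ne' (finrank_eq_zero_of_isZero hi.2)
  have hlt : finrank k W < n :=
    h ▸ (finrank_le_of_mono f).lt_of_ne fun he ↦ hiso (isIso_of_mono_of_finrank_eq f he)
  obtain ⟨S, hS, g, _⟩ := ih _ hlt W (finrank_pos_of_ne_zero hf) rfl
  exact ⟨S, hS, g ≫ f, inferInstance⟩

noncomputable section

variable {V : FDRep k G}

abbrev ofSubrepresentation (W : Subrepresentation V.ρ) : FDRep k G :=
  FDRep.of W.toRepresentation

def subrepresentationι (W : Subrepresentation V.ρ) : ofSubrepresentation W ⟶ V where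
  hom := FGModuleCat.ofHom W.toSubmodule.subtype
  comm _ := rfl

instance (W : Subrepresentation V.ρ) : Mono (subrepresentationι W) :=
  (mono_iff_injective _).2 W.toSubmodule.injective_subtype

def kerSubrepresentation {W : FDRep k G} (f : V ⟶ W) : Subrepresentation V.ρ where
  toSubmodule := LinearMap.ker f.hom.hom.hom
  apply_mem_toSubmodule g x hx := by
    change f (V.ρ g x) = 0
    rw [hom_comm_apply, show f x = 0 from hx, map_zero]

end

end Monoid

section Maschke

variable {k : Type u} [Field k] {G : Type u} [Group G] [Finite G] [NeZero (Nat.card G : k)]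

/-- By Maschke's theorem `S` is a direct summand of `V`; a simple subrepresentation of the
complement does the job. -/
theorem exists_simple_mono_finrank_add_le {S V : FDRep k G} (f : S ⟶ V) [Mono f]
    (h : finrank k S < finrank k V) :
    ∃ (T : FDRep k G) (_ : Simple T) (g : T ⟶ V),
      Mono g ∧ finrank k T + finrank k S ≤ finrank k V := by
  let r : V ⟶ S := Injective.factorThru (𝟙 S) f
  have hr : Function.Surjective r.hom.hom.hom := fun x ↦
    ⟨f x, ConcreteCategory.congr_hom (Injective.comp_factorThru (𝟙 S) f) x⟩
  have hK : finrank k (ofSubrepresentation (kerSubrepresentation r)) + finrank k S =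
      finrank k V := by
    have := LinearMap.finrank_range_add_finrank_ker r.hom.hom.hom
    rw [LinearMap.range_eq_top.2 hr, finrank_top] at this
    exact (add_comm _ _).trans this
  obtain ⟨T, hT, g, _⟩ :=
    exists_simple_mono (ofSubrepresentation (kerSubrepresentation r)) (by omega)
  exact ⟨T, hT, g ≫ subrepresentationι _, inferInstance, by have := finrank_le_of_mono g; omega⟩

end Maschke

end FDRep

section

open FDRep

variable {k : Type u} [Field k] {G H : Type u} [Monoid G]

def FrobeniusReciprocity [Monoid H] (φ : H →* G) (ind : FDRep k H ⥤ FDRep k G) : Prop :=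
  ∀ (σ : FDRep k H) (R : FDRep k G), Simple σ → Simple R →
    ((∃ f : σ ⟶ (Action.res (FGModuleCat k) φ).obj R, f ≠ 0) ↔ (∃ g : R ⟶ ind.obj σ, g ≠ 0))

namespace FrobeniusReciprocity

theorem finrank_le [Monoid H] {φ : H →* G} {ind : FDRep k H ⥤ FDRep k G}
    (hFrob : FrobeniusReciprocity φ ind) {ρ : FDRep k H} [Simple ρ] {R : FDRep k G} [Simple R]
    (g : R ⟶ ind.obj ρ) (hg : g ≠ 0) : finrank k ρ ≤ finrank k R := by
  obtain ⟨f, hf⟩ := (hFrob ρ R ‹_› ‹_›).2 ⟨g, hg⟩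
  have := mono_of_nonzero_from_simple hf
  exact finrank_le_of_mono f

/-- `Res R` contains `ρ` and, by Maschke, a simple `σ` of dimension at most `dim R - dim ρ`;
reciprocity embeds `R` in `ind σ`. -/
theorem mul_finrank_add_le [Group H] [Finite H] [NeZero (Nat.card H : k)]
    {φ : H →* G} {ind : FDRep k H ⥤ FDRep k G} (hFrob : FrobeniusReciprocity φ ind) {n : ℕ}
    (hdim : ∀ σ : FDRep k H, finrank k (ind.obj σ) = n * finrank k σ)
    {ρ : FDRep k H} [Simple ρ] {R : FDRep k G} [Simple R] (g : R ⟶ ind.obj ρ) (hg : g ≠ 0)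
    (hlt : finrank k ρ < finrank k R) : n * finrank k ρ + finrank k R ≤ n * finrank k R := by
  obtain ⟨f, hf⟩ := (hFrob ρ R ‹_› ‹_›).2 ⟨g, hg⟩
  have := mono_of_nonzero_from_simple hf
  obtain ⟨σ, hσ, e, _, hσR⟩ := exists_simple_mono_finrank_add_le f hlt
  obtain ⟨g', hg'⟩ := (hFrob σ R hσ ‹_›).1 ⟨e, (Simple.mono_iff_ne_zero e).1 ‹_›⟩
  have := mono_of_nonzero_from_simple hg'
  have hRσ : finrank k R ≤ n * finrank k σ := hdim σ ▸ finrank_le_of_mono g'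
  change finrank k σ + finrank k ρ ≤ finrank k R at hσR
  calc n * finrank k ρ + finrank k R ≤ n * (finrank k σ + finrank k ρ) := by rw [mul_add]; omega
    _ ≤ n * finrank k R := Nat.mul_le_mul_left n hσR

end FrobeniusReciprocity

end

theorem ind_odd_dim_irreducible_or_extends_general (G : Type) [Group G] [Fintype G] (H : Subgroup G)
    (ind : FDRep ℂ H ⥤ FDRep ℂ G)
    (hdim : ∀ σ : FDRep ℂ H, Module.finrank ℂ (ind.obj σ) = 3 * Module.finrank ℂ σ)
    (hFrob : ∀ (σ : FDRep ℂ H) (R : FDRep ℂ G), Simple σ → Simple R →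
      ((∃ f : σ ⟶ (Action.res (FGModuleCat ℂ) H.subtype).obj R, f ≠ 0) ↔
        (∃ g : R ⟶ ind.obj σ, g ≠ 0)))
    (ρ : FDRep ℂ H) (hρ : Simple ρ) (d : ℕ)
    (hd : Module.finrank ℂ ρ = d) (hodd : Odd d) :
    Simple (ind.obj ρ) ∨
      ∃ R : FDRep ℂ G, Simple R ∧ (∃ g : R ⟶ ind.obj ρ, g ≠ 0) ∧
        Module.finrank ℂ R = d := by
  refine or_iff_not_imp_left.2 fun hns ↦ ?_
  by_contra! hne
  subst hd
  obtain ⟨m, hm⟩ := hodd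
  have bound : ∀ (R : FDRep ℂ G) [Simple R] (g : R ⟶ ind.obj ρ), Mono g →
      3 * finrank ℂ ρ + finrank ℂ R ≤ 3 * finrank ℂ R := fun R _ g hg ↦
    have hg0 := (Simple.mono_iff_ne_zero g).1 hg
    FrobeniusReciprocity.mul_finrank_add_le hFrob hdim g hg0 <|
      (FrobeniusReciprocity.finrank_le hFrob g hg0).lt_of_ne (hne R ‹_› ⟨g, hg0⟩).symm
  obtain ⟨S₁, _, f₁, _⟩ := FDRep.exists_simple_mono (ind.obj ρ) (by rw [hdim]; omega)
  obtain ⟨S₂, _, f₂, _, hS⟩ :=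
    FDRep.exists_simple_mono_finrank_add_le f₁ (FDRep.finrank_lt_of_mono_of_not_simple f₁ hns)
  have := bound S₁ f₁ ‹_›
  have := bound S₂ f₂ ‹_›
  rw [hdim] at hS
  omega

/-- Let `G` be a finite group, `H ≤ G` of index 3, and `ρ` an irreducible complex
`H`-representation of odd dimension `d` (`ind` denotes induction, tripling dimensions and
satisfying Frobenius reciprocity).  Then either `Ind ρ` is irreducible (of dimension `3d`),
or some irreducible constituent of `Ind ρ` has dimension exactly `d` (i.e. `ρ` extends). -/
theorem ind_odd_dim_irreducible_or_extends (G : Type) [Group G] [Fintype G] (H : Subgroup G)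
    (hidx : H.index = 3)
    (ind : FDRep ℂ H ⥤ FDRep ℂ G)
    (hdim : ∀ σ : FDRep ℂ H, Module.finrank ℂ (ind.obj σ) = 3 * Module.finrank ℂ σ)
    (hFrob : ∀ (σ : FDRep ℂ H) (R : FDRep ℂ G), Simple σ → Simple R →
      ((∃ f : σ ⟶ (Action.res (FGModuleCat ℂ) H.subtype).obj R, f ≠ 0) ↔
        (∃ g : R ⟶ ind.obj σ, g ≠ 0)))
    (ρ : FDRep ℂ H) (hρ : Simple ρ) (d : ℕ)
    (hd : Module.finrank ℂ ρ = d) (hodd : Odd d) :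
    Simple (ind.obj ρ) ∨
      ∃ R : FDRep ℂ G, Simple R ∧ (∃ g : R ⟶ ind.obj ρ, g ≠ 0) ∧
        Module.finrank ℂ R = d :=
  ind_odd_dim_irreducible_or_extends_general G H ind hdim hFrob ρ hρ d hd hodd
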